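/- The 16 spin-1 Weinberg matrices S_{μν} form a 4-tight frame for the space of 3×3 complex matrices with Hilbert–Schmidt inner product: for every 3×3 matrix A, Σ_{μ,ν=0}^{3} |tr(A† S_{μν})|² = 4 · tr(A†A). -/

import Mathlib

open Matrix Complex

/-- The standard 3×3 spin-1 angular momentum matrices J₁, J₂, J₃. -/
noncomputable def J : Fin 3 → Matrix (Fin 3) (Fin 3) ℂ :=
  ![((Real.sqrt 2 : ℝ) : ℂ)⁻¹ • !![0, 1, 0; 1, 0, 1; 0, 1, 0],
    ((Real.sqrt 2 : ℝ) : ℂ)⁻¹ • !![0, -I, 0; I, 0, -I; 0, I, 0],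
    !![1, 0, 0; 0, 0, 0; 0, 0, -1]]

/-- The spin-1 Weinberg covariant matrices: S₀₀ = 𝟙, S_{a0} = S_{0a} = J_a,
S_{ab} = J_aJ_b + J_bJ_a − δ_{ab}𝟙. -/
noncomputable def S (μ ν : Fin 4) : Matrix (Fin 3) (Fin 3) ℂ :=
  if hμ : μ = 0 then (if hν : ν = 0 then 1 else J (ν.pred hν))
  else if hν : ν = 0 then J (μ.pred hμ)
  else J (μ.pred hμ) * J (ν.pred hν) + J (ν.pred hν) * J (μ.pred hμ) -
    (if μ = ν then 1 else 0)


/-!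
A family `F` of matrices satisfies `∑ₖ |⟨F k, A⟩|² = c ‖A‖²` for the Hilbert–Schmidt inner
product as soon as its frame operator `X ↦ ∑ₖ ⟨F k, X⟩ • F k` is `c • id`: pairing the frame
operator applied to `A` with `A` gives both sides. For the Weinberg matrices the frame operator
is computed from the explicit table of the ten distinct `S μ ν`; it is `4 • id` because the
identity, the `J a` and the traceless quadrupoles `S a b - δ_ab/3` span the spin-0, spin-1 and
spin-2 sectors of `Matrix (Fin 3) (Fin 3) ℂ`, each with total weight `4`.
-/

theorem sum_norm_trace_conjTranspose_mul_sq_of_frame {ι m n : Type*} [Fintype ι] [Fintype m]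
    [Fintype n] {F : ι → Matrix m n ℂ} {c : ℂ}
    (hF : ∀ X, ∑ k, ((F k)ᴴ * X).trace • F k = c • X) (A : Matrix m n ℂ) :
    ((∑ k, ‖(Aᴴ * F k).trace‖ ^ 2 : ℝ) : ℂ) = c * (Aᴴ * A).trace := by
  have norm_sq_eq (k : ι) :
      ((‖(Aᴴ * F k).trace‖ ^ 2 : ℝ) : ℂ) = (Aᴴ * ((F k)ᴴ * A).trace • F k).trace := by
    rw [Matrix.mul_smul, trace_smul, smul_eq_mul, Complex.ofReal_pow, ← Complex.conj_mul',
      starRingEnd_apply, ← trace_conjTranspose, conjTranspose_mul, conjTranspose_conjTranspose]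
  rw [Complex.ofReal_sum, Finset.sum_congr rfl fun k _ ↦ norm_sq_eq k, ← trace_sum,
    ← Matrix.mul_sum, hF, Matrix.mul_smul, trace_smul, smul_eq_mul]

theorem ofReal_sqrt_two_sq : ((Real.sqrt 2 : ℝ) : ℂ) ^ 2 = 2 := by
  rw [← Complex.ofReal_pow, Real.sq_sqrt zero_le_two]
  norm_num

theorem S_comm (μ ν : Fin 4) : S ν μ = S μ ν := by
  unfold S
  by_cases hμ : μ = 0 <;> by_cases hν : ν = 0 <;> simp [hμ, hν, eq_comm, add_comm]

theorem S_zero_zero : S 0 0 = 1 := rfl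

theorem S_zero_one : S 0 1 = ((Real.sqrt 2 : ℝ) : ℂ)⁻¹ • !![0, 1, 0; 1, 0, 1; 0, 1, 0] := rfl

theorem S_zero_two : S 0 2 = ((Real.sqrt 2 : ℝ) : ℂ)⁻¹ • !![0, -I, 0; I, 0, -I; 0, I, 0] := rfl

theorem S_zero_three : S 0 3 = !![1, 0, 0; 0, 0, 0; 0, 0, -1] := rfl

theorem S_one_one : S 1 1 = !![0, 0, 1; 0, 1, 0; 1, 0, 0] := by
  ext i j; fin_cases i <;> fin_cases j <;> simp [S, _root_.J] <;> grind [ofReal_sqrt_two_sq]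

theorem S_two_two : S 2 2 = !![0, 0, -1; 0, 1, 0; -1, 0, 0] := by
  ext i j
  fin_cases i <;> fin_cases j <;> simp [S, _root_.J] <;> grind [ofReal_sqrt_two_sq, I_sq]

theorem S_three_three : S 3 3 = !![1, 0, 0; 0, -1, 0; 0, 0, 1] := by
  ext i j; fin_cases i <;> fin_cases j <;> simp [S, _root_.J]

theorem S_one_two : S 1 2 = !![0, 0, -I; 0, 0, 0; I, 0, 0] := by
  ext i j
  fin_cases i <;> fin_cases j <;> simp [S, _root_.J] <;> grind [ofReal_sqrt_two_sq, I_sq]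

theorem S_one_three :
    S 1 3 = ((Real.sqrt 2 : ℝ) : ℂ)⁻¹ • !![0, 1, 0; 1, 0, -1; 0, -1, 0] := by
  ext i j; fin_cases i <;> fin_cases j <;> simp [S, _root_.J]

theorem S_two_three :
    S 2 3 = ((Real.sqrt 2 : ℝ) : ℂ)⁻¹ • !![0, -I, 0; I, 0, I; 0, -I, 0] := by
  ext i j; fin_cases i <;> fin_cases j <;> simp [S, _root_.J]

theorem sum_trace_conjTranspose_S_mul_smul_S (X : Matrix (Fin 3) (Fin 3) ℂ) :
    ∑ μ, ∑ ν, ((S μ ν)ᴴ * X).trace • S μ ν = (4 : ℂ) • X := by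
  simp only [Fin.sum_univ_four, S_comm 0 1, S_comm 0 2, S_comm 0 3, S_comm 1 2, S_comm 1 3,
    S_comm 2 3, S_zero_zero, S_zero_one, S_zero_two, S_zero_three, S_one_one, S_one_two,
    S_one_three, S_two_two, S_two_three, S_three_three]
  ext i j
  fin_cases i <;> fin_cases j <;> simp [Matrix.trace, Matrix.mul_apply, Fin.sum_univ_three] <;>
    grind [ofReal_sqrt_two_sq, I_sq]

/-- The 16 spin-1 Weinberg matrices form a 4-tight frame for the 3×3 complex
matrices with the Hilbert–Schmidt inner product:
Σ_{μν} |tr(A† S_{μν})|² = 4 tr(A†A) for every A. -/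
theorem weinberg_tight_frame (A : Matrix (Fin 3) (Fin 3) ℂ) :
    ((∑ μ : Fin 4, ∑ ν : Fin 4, ‖(Aᴴ * S μ ν).trace‖ ^ 2 : ℝ) : ℂ) =
      4 * (Aᴴ * A).trace := by
  have frame (X : Matrix (Fin 3) (Fin 3) ℂ) :
      ∑ p : Fin 4 × Fin 4, ((S p.1 p.2)ᴴ * X).trace • S p.1 p.2 = (4 : ℂ) • X := by
    simpa only [Fintype.sum_prod_type] using sum_trace_conjTranspose_S_mul_smul_S X
  simpa only [Fintype.sum_prod_type] using sum_norm_trace_conjTranspose_mul_sq_of_frame frame A
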